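/- arXiv:1702.05772 — 3 statements merged into one kernel-verified Lean document; each statement's English description precedes it below -/
import Mathlib

section
/- For all natural numbers n \ge 1 and all nonnegative integers \lambda, \prod_{i=1}^n (\lambda + i + 1) > \sum_{i=0}^n \frac{(n!)^2}{(i!)^2 (n-i)!} \lambda(\lambda-1)\cdots(\lambda - i + 1). -/
/-!
Since `(n!)² / ((i!)² (n-i)!) = n! · C(n,i) / i!` and `λ(λ-1)⋯(λ-i+1) = i! · C(λ,i)`, the `i`-th
summand is `n! · C(n,i) · C(λ,i)`. By Vandermonde's identity the sum is `n! · C(λ+n, n)`, which is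
`(λ+1)(λ+2)⋯(λ+n)`; this is smaller than `(λ+2)(λ+3)⋯(λ+n+1)` factor by factor.
-/

open Nat Finset

theorem Nat.sum_range_choose_mul_choose (n l : ℕ) :
    ∑ i ∈ range (n + 1), n.choose i * l.choose i = (l + n).choose n := by
  rw [add_choose_eq, Nat.sum_antidiagonal_eq_sum_range_succ_mk]
  refine sum_congr rfl fun i hi => ?_
  rw [choose_symm (mem_range_succ_iff.mp hi), mul_comm]

theorem Nat.prod_Icc_add_eq_ascFactorial (l n : ℕ) :
    ∏ i ∈ Icc 1 n, (l + i) = (l + 1).ascFactorial n := by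
  induction n with
  | zero => simp
  | succ n ih =>
    rw [prod_Icc_succ_top (by omega), ih, ascFactorial_succ]
    ring

theorem factorial_sq_div_mul_descFactorial_eq {K : Type*} [Field K] [CharZero K] {n i : ℕ}
    (hi : i ≤ n) (l : ℕ) :
    (n ! : K) ^ 2 / ((i ! : K) ^ 2 * ((n - i)! : K)) * (l.descFactorial i : K) =
      ((n ! * (n.choose i * l.choose i) : ℕ) : K) := by
  have hn : (n.choose i : K) * i ! * (n - i)! = n ! := by
    exact_mod_cast choose_mul_factorial_mul_factorial hi
  rw [descFactorial_eq_factorial_mul_choose]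
  push_cast
  rw [← hn]
  field_simp

theorem sum_factorial_sq_div_mul_descFactorial_eq_prod {K : Type*} [Field K] [CharZero K]
    (n l : ℕ) :
    ∑ i ∈ range (n + 1),
        (n ! : K) ^ 2 / ((i ! : K) ^ 2 * ((n - i)! : K)) * (l.descFactorial i : K) =
      ∏ i ∈ Icc 1 n, ((l : K) + i) := by
  rw [sum_congr rfl fun i hi =>
      factorial_sq_div_mul_descFactorial_eq (mem_range_succ_iff.mp hi) l,
    ← cast_sum, ← mul_sum, sum_range_choose_mul_choose, ← ascFactorial_eq_factorial_mul_choose,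
    ← prod_Icc_add_eq_ascFactorial]
  norm_cast

/-- for `n ≥ 1` and any nonnegative integer `λ`,
`∏_{i=1}^n (λ+i+1) > ∑_{i=0}^n (n!)²/((i!)²(n-i)!) · λ(λ-1)⋯(λ-i+1)`. -/
theorem indicial_product_gt (n l : ℕ) (hn : 1 ≤ n) :
    (∑ i ∈ Finset.range (n + 1),
        ((n ! : ℚ) ^ 2 / ((i ! : ℚ) ^ 2 * ((n - i)! : ℚ))) * (l.descFactorial i : ℚ))
      < ∏ i ∈ Finset.Icc 1 n, ((l : ℚ) + (i : ℚ) + 1) := by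
  rw [sum_factorial_sq_div_mul_descFactorial_eq_prod]
  refine prod_lt_prod_of_nonempty (fun i hi => ?_) (fun i _ => lt_add_one _) (nonempty_Icc.mpr hn)
  have : 1 ≤ i := (mem_Icc.mp hi).1
  positivity
end

section
/- Let n \ge 1, w \in \mathbb{C}, a \in \mathbb{C} with a \notin \mathbb{Q}_{<-1} (i.e. a is not a rational number strictly less than -1). Then the polynomial equation \prod_{i=1}^n(\lambda+i+1) + a\big(n! + \sum_{i=1}^n \frac{(n!)^2}{(i!)^2(n-i)!}\lambda(\lambda-1)\cdots(\lambda-i+1)\big) = 0 has no solutions \lambda in the nonnegative integers. -/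
/-!
At a natural number `l` the product is `P = (l+n+1)!/(l+1)!`, and since
`(n!)²/((i!)²(n-i)!) · l(l-1)⋯(l-i+1) = n! C(n,i) C(l,i)`, Vandermonde's identity turns the
bracket into `Q = n! C(n+l,n)`. Both are positive integers with `P/Q = (l+n+1)/(l+1) > 1`,
so a root would force `a = -P/Q`, a rational number below `-1`.
-/

open Nat Finset

namespace Nat

theorem sum_range_choose_mul_choose_s11 (m n : ℕ) :
    ∑ i ∈ range (m + 1), m.choose i * n.choose i = (m + n).choose m := by
  rw [add_choose_eq, Finset.Nat.sum_antidiagonal_eq_sum_range_succ_mk, ← sum_range_reflect]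
  refine sum_congr rfl fun i hi => ?_
  rw [Nat.add_sub_cancel, choose_symm (mem_range_succ_iff.mp hi)]

theorem factorial_mul_prod_Icc_add_add_one (l n : ℕ) :
    (l + 1)! * ∏ i ∈ Icc 1 n, (l + i + 1) = (l + n + 1)! := by
  induction n with
  | zero => simp
  | succ n ih =>
    rw [prod_Icc_succ_top (Nat.le_add_left 1 n), ← mul_assoc, ih, ← add_assoc,
      factorial_succ (l + n + 1)]
    ring

theorem add_one_mul_prod_Icc_add_add_one (l n : ℕ) :
    (l + 1) * ∏ i ∈ Icc 1 n, (l + i + 1) = (l + n + 1) * (n ! * (n + l).choose n) := by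
  refine Nat.eq_of_mul_eq_mul_right (factorial_pos l) ?_
  calc (l + 1) * (∏ i ∈ Icc 1 n, (l + i + 1)) * l !
      = (l + 1)! * ∏ i ∈ Icc 1 n, (l + i + 1) := by rw [factorial_succ]; ring
    _ = (l + n + 1) * (l + n)! := factorial_mul_prod_Icc_add_add_one l n
    _ = (l + n + 1) * ((l + n).choose n * l ! * n !) := by
      rw [add_choose_mul_factorial_mul_factorial]
    _ = (l + n + 1) * (n ! * (n + l).choose n) * l ! := by rw [add_comm l n]; ring

theorem factorial_mul_add_choose_pos (n l : ℕ) : 0 < n ! * (n + l).choose n :=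
  Nat.mul_pos (factorial_pos n) (choose_pos (Nat.le_add_right n l))

theorem factorial_mul_add_choose_lt_prod_Icc {n : ℕ} (hn : 1 ≤ n) (l : ℕ) :
    n ! * (n + l).choose n < ∏ i ∈ Icc 1 n, (l + i + 1) := by
  refine Nat.lt_of_mul_lt_mul_left (a := l + 1) ?_
  rw [add_one_mul_prod_Icc_add_add_one]
  exact Nat.mul_lt_mul_of_pos_right (by omega) (factorial_mul_add_choose_pos n l)

end Nat

section IndicialTerms

variable {K : Type*} [Field K] [CharZero K]

theorem cast_factorial_sq_div_mul_descFactorial {n i : ℕ} (hi : i ≤ n) (l : ℕ) :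
    (n ! : K) ^ 2 / ((i ! : K) ^ 2 * ((n - i)! : K)) * (l.descFactorial i : K) =
      (n ! * (n.choose i * l.choose i) : ℕ) := by
  push_cast [descFactorial_eq_factorial_mul_choose, cast_choose K hi]
  field_simp

theorem factorial_add_sum_Icc_eq_factorial_mul_choose (n l : ℕ) :
    (n ! : K) + ∑ i ∈ Icc 1 n,
        (n ! : K) ^ 2 / ((i ! : K) ^ 2 * ((n - i)! : K)) * (l.descFactorial i : K) =
      (n ! * (n + l).choose n : ℕ) := by
  rw [← sum_range_choose_mul_choose_s11, mul_sum, cast_sum, range_eq_Ico,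
    sum_eq_sum_Ico_succ_bot (succ_pos n)]
  simp only [choose_zero_right, mul_one]
  congr 1
  exact sum_congr rfl fun i hi =>
    cast_factorial_sq_div_mul_descFactorial (Nat.lt_succ_iff.mp (mem_Ico.mp hi).2) l

end IndicialTerms

theorem indicial_no_nat_roots_general (n : ℕ) (hn : 1 ≤ n) (a : ℂ)
    (ha : ¬ ∃ q : ℚ, q < -1 ∧ a = (q : ℂ)) :
    ∀ l : ℕ,
      (∏ i ∈ Finset.Icc 1 n, ((l : ℂ) + (i : ℂ) + 1)) +
        a * ((n ! : ℂ) + ∑ i ∈ Finset.Icc 1 n,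
          ((n ! : ℂ) ^ 2 / ((i ! : ℂ) ^ 2 * ((n - i)! : ℂ))) * (l.descFactorial i : ℂ)) ≠ 0 := by
  intro l h
  rw [factorial_add_sum_Icc_eq_factorial_mul_choose] at h
  set P := ∏ i ∈ Icc 1 n, (l + i + 1)
  set Q := n ! * (n + l).choose n
  have hQP : Q < P := factorial_mul_add_choose_lt_prod_Icc hn l
  have hQ : 0 < Q := factorial_mul_add_choose_pos n l
  refine ha ⟨-P / Q, ?_, ?_⟩
  · rw [div_lt_iff₀ (mod_cast hQ)]
    linarith [(Nat.cast_lt (α := ℚ)).mpr hQP]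
  · push_cast [P]
    rw [eq_div_iff (mod_cast hQ.ne')]
    linear_combination h

/-- for `n ≥ 1` and `a ∈ ℂ` not a rational number `< -1`, the indicial equation
`∏_{i=1}^n (λ+i+1) + a (n! + ∑_{i=1}^n (n!)²/((i!)²(n-i)!) λ(λ-1)⋯(λ-i+1)) = 0`
has no nonnegative integer solutions `λ`. -/
theorem indicial_no_nat_roots (n : ℕ) (hn : 1 ≤ n) (w a : ℂ)
    (ha : ¬ ∃ q : ℚ, q < -1 ∧ a = (q : ℂ)) :
    ∀ l : ℕ,
      (∏ i ∈ Finset.Icc 1 n, ((l : ℂ) + (i : ℂ) + 1)) +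
        a * ((n ! : ℂ) + ∑ i ∈ Finset.Icc 1 n,
          ((n ! : ℂ) ^ 2 / ((i ! : ℂ) ^ 2 * ((n - i)! : ℂ))) * (l.descFactorial i : ℂ)) ≠ 0 :=
  indicial_no_nat_roots_general n hn a ha
end

section
/- Let \phi(z) = \sum_{i=0}^n a_i(z)\bar z^i with a_i \in H^\infty(\mathbb{D}), \tilde\phi = \sum a_i z^{n-i}, and \widetilde{\partial\phi/\partial z} = \sum a_i' z^{n-i}. Then the differential operator D_\phi has leading expansion D_\phi = \tilde\phi D^n + \big((n+1)\tilde\phi' - \widetilde{\partial\phi/\partial z}\big) D^{n-1} + (terms of order at most n-2 in D). -/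
open MeasureTheory Complex Metric

noncomputable section

/-- The open unit disc. -/
def 𝔻 : Set ℂ := Metric.ball 0 1

/-- Normalized Lebesgue area measure on the unit disc. -/
def μD : MeasureTheory.Measure ℂ := (ENNReal.ofReal Real.pi)⁻¹ • (volume.restrict 𝔻)

/-- The Bergman space `A²(𝔻)`: the (closed) subspace of `L²(𝔻)` of functions having a
holomorphic representative on `𝔻`. -/
def bergman : Submodule ℂ (Lp ℂ 2 μD) :=
  (Submodule.span ℂ {f : Lp ℂ 2 μD | ∃ g : ℂ → ℂ, DifferentiableOn ℂ g 𝔻 ∧ ⇑f =ᵐ[μD] g}).topologicalClosure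

instance : CompleteSpace bergman :=
  (Submodule.isClosed_topologicalClosure _).completeSpace_coe

open Classical in
/-- The element of `L²(𝔻)` represented by `f` (junk value `0` if `f ∉ L²`). -/
def toLp' (f : ℂ → ℂ) : Lp ℂ 2 μD :=
  if h : MemLp f 2 μD then h.toLp f else 0

/-- The Toeplitz operator with symbol `φ` applied to `f`, viewed in `L²(𝔻)`:
the orthogonal (Bergman) projection of `φ · f` onto the Bergman space. -/
def T (φ f : ℂ → ℂ) : Lp ℂ 2 μD :=
  (Submodule.orthogonalProjectionOnto bergman (toLp' (fun z => φ z * f z)) : Lp ℂ 2 μD)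

/-- The operator `zD + c`, `g ↦ z g' + c g`. -/
def zD (c : ℂ) (g : ℂ → ℂ) : ℂ → ℂ := fun z => z * deriv g z + c * g z

/-- `zdProd s m = ∏_{k=s}^{s+m-1} (zD + k)` (composition of the commuting operators `zD+k`). -/
def zdProd (s : ℕ) : ℕ → (ℂ → ℂ) → (ℂ → ℂ)
  | 0, g => g
  | (m+1), g => zD (s + m) (zdProd s m g)

/-- The differential operator
`D_φ = ∏_{i=2}^{n+1}(zD+i) a₀ + ∑_{i=1}^n ∏_{k=i+2}^{n+1}(zD+k) Dⁱ aᵢ`. -/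
def Dop (n : ℕ) (a : ℕ → ℂ → ℂ) (f : ℂ → ℂ) : ℂ → ℂ := fun z =>
  zdProd 2 n (fun w => a 0 w * f w) z +
    ∑ i ∈ Finset.Icc 1 n, zdProd (i + 2) (n - i) (deriv^[i] (fun w => a i w * f w)) z

/-!
Each factor `∏_{k=s}^{s+m-1} (zD + k)` expands as `∑ⱼ S(s,m,j) zʲ Dʲ` with `S(s,m,m) = 1` and
`S(s,m,m-1) = m (s + m - 1)`, so the `i`-th summand of `D_φ g` is `∑ⱼ S(i+2,n-i,j) zʲ Dⁱ⁺ʲ(aᵢ g)`,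
and Leibniz's rule turns `D_φ` into `∑ₖ cₖ Dᵏ` with holomorphic `cₖ`. Only the term `j = n - i` of the `i`-th summand reaches
`Dⁿ`, contributing `aᵢ z^{n-i}`; the terms `j = n - i` and `j = n - i - 1` reach `D^{n-1}`,
contributing `n aᵢ' z^{n-i} + (n - i)(n + 1) aᵢ z^{n-i-1}`, which is the `i`-th term of
`(n + 1) φ̃' - (∂φ/∂z)^~`.
-/

open Finset

section Holomorphic

variable {U : Set ℂ} {f g : ℂ → ℂ} {z : ℂ}

theorem DifferentiableOn.iteratedDeriv_of_isOpen (hf : DifferentiableOn ℂ f U) (hU : IsOpen U)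
    (k : ℕ) : DifferentiableOn ℂ (iteratedDeriv k f) U := by
  rw [iteratedDeriv_eq_iterate]
  exact ((hf.analyticOnNhd hU).iterated_deriv k).differentiableOn

theorem DifferentiableOn.hasDerivAt_iteratedDeriv (hf : DifferentiableOn ℂ f U) (hU : IsOpen U)
    (hz : z ∈ U) (k : ℕ) : HasDerivAt (iteratedDeriv k f) (iteratedDeriv (k + 1) f z) z := by
  rw [iteratedDeriv_succ]
  exact ((hf.iteratedDeriv_of_isOpen hU k).differentiableAt (hU.mem_nhds hz)).hasDerivAt

theorem DifferentiableOn.iteratedDeriv_mul_eq_sum (hf : DifferentiableOn ℂ f U)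
    (hg : DifferentiableOn ℂ g U) (hU : IsOpen U) (hz : z ∈ U) {M N : ℕ} (hMN : M < N) :
    iteratedDeriv M (fun w => f w * g w) z =
      ∑ k ∈ range N, (M.choose k : ℂ) * iteratedDeriv (M - k) f z * iteratedDeriv k g z := by
  rw [show (fun w => f w * g w) = fun w => g w * f w from funext fun w => mul_comm _ _,
    iteratedDeriv_fun_mul ((hg.contDiffOn hU).contDiffAt (hU.mem_nhds hz))
      ((hf.contDiffOn hU).contDiffAt (hU.mem_nhds hz)),
    ← sum_subset (range_subset_range.mpr hMN) fun k _ hk => by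
      rw [Nat.choose_eq_zero_of_lt (by simpa using hk)]
      simp]
  exact sum_congr rfl fun k _ => by ring

end Holomorphic

/-- `zdProd s m = ∑ⱼ zdCoeff s m j • zʲ Dʲ`; the recursion comes from
`(zD + c) (zʲ Dʲ) = (j + c) zʲ Dʲ + zʲ⁺¹ Dʲ⁺¹`. -/
def zdCoeff (s : ℕ) : ℕ → ℕ → ℕ
  | 0, 0 => 1
  | 0, _ + 1 => 0
  | m + 1, 0 => (s + m) * zdCoeff s m 0
  | m + 1, j + 1 => zdCoeff s m j + (j + 1 + s + m) * zdCoeff s m (j + 1)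

theorem zdCoeff_eq_zero_of_lt (s : ℕ) : ∀ {m j : ℕ}, m < j → zdCoeff s m j = 0
  | 0, _ + 1, _ => rfl
  | m + 1, j + 1, h => by
    simp only [zdCoeff, zdCoeff_eq_zero_of_lt s (m := m) (j := j) (by omega),
      zdCoeff_eq_zero_of_lt s (m := m) (j := j + 1) (by omega), mul_zero, add_zero]

theorem zdCoeff_self (s : ℕ) : ∀ m, zdCoeff s m m = 1
  | 0 => rfl
  | m + 1 => by simp [zdCoeff, zdCoeff_self s m, zdCoeff_eq_zero_of_lt s (Nat.lt_succ_self m)]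

theorem zdCoeff_succ_self (s : ℕ) : ∀ m, zdCoeff s (m + 1) m = (m + 1) * (s + m)
  | 0 => by simp [zdCoeff]
  | m + 1 => by
    rw [zdCoeff, zdCoeff_succ_self s m, zdCoeff_self]
    ring

theorem sum_zdCoeff_succ (s m : ℕ) (x : ℕ → ℂ) :
    ∑ j ∈ range (m + 1), (zdCoeff s m j : ℂ) * (((j : ℂ) + s + m) * x j + x (j + 1)) =
      ∑ j ∈ range (m + 2), (zdCoeff s (m + 1) j : ℂ) * x j := by
  set T : ℕ → ℂ := fun j => zdCoeff s m j * ((j : ℂ) + s + m) * x j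
  have hshift : ∑ j ∈ range (m + 1), T j = ∑ j ∈ range (m + 1), T (j + 1) + T 0 := by
    rw [← sum_range_succ' T, sum_range_succ T (m + 1)]
    simp [T, zdCoeff_eq_zero_of_lt s (Nat.lt_succ_self m)]
  calc _ = ∑ j ∈ range (m + 1), T j + ∑ j ∈ range (m + 1), (zdCoeff s m j : ℂ) * x (j + 1) := by
        rw [← sum_add_distrib]
        exact sum_congr rfl fun j _ => by ring
    _ = ∑ j ∈ range (m + 1), (T (j + 1) + zdCoeff s m j * x (j + 1)) + T 0 := by
        rw [hshift, sum_add_distrib]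
        ring
    _ = _ := by
        rw [sum_range_succ' _ (m + 1)]
        congr 1
        · exact sum_congr rfl fun j _ => by simp only [T, zdCoeff]; push_cast; ring
        · simp only [T, zdCoeff]; push_cast; ring

theorem zdProd_eqOn_sum {U : Set ℂ} (hU : IsOpen U) {h : ℂ → ℂ} (hh : DifferentiableOn ℂ h U)
    (s : ℕ) : ∀ m, Set.EqOn (zdProd s m h)
      (fun z => ∑ j ∈ range (m + 1), (zdCoeff s m j : ℂ) * (z ^ j * iteratedDeriv j h z)) U
  | 0 => fun z _ => by simp [zdProd, zdCoeff]
  | m + 1 => fun z hz => by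
    have ih := zdProd_eqOn_sum hU hh s m
    have hderiv : HasDerivAt
        (fun w => ∑ j ∈ range (m + 1), (zdCoeff s m j : ℂ) * (w ^ j * iteratedDeriv j h w))
        (∑ j ∈ range (m + 1), (zdCoeff s m j : ℂ) *
          (j * z ^ (j - 1) * iteratedDeriv j h z + z ^ j * iteratedDeriv (j + 1) h z)) z :=
      HasDerivAt.fun_sum fun j _ =>
        ((hasDerivAt_pow j z).mul (hh.hasDerivAt_iteratedDeriv hU hz j)).const_mul _
    change z * deriv (zdProd s m h) z + _ * zdProd s m h z = _
    rw [ih.deriv hU hz, hderiv.deriv, ih hz]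
    dsimp only
    rw [← sum_zdCoeff_succ, mul_sum, mul_sum, ← sum_add_distrib]
    refine sum_congr rfl fun j _ => ?_
    rcases j with _ | j <;> push_cast <;> ring

def zdDerivMulCoeff (s q i : ℕ) (a : ℂ → ℂ) (k : ℕ) (z : ℂ) : ℂ :=
  ∑ j ∈ range (q + 1),
    (zdCoeff s q j : ℂ) * z ^ j * ((i + j).choose k : ℂ) * iteratedDeriv (i + j - k) a z

theorem zdProd_iteratedDeriv_mul_eq_sum {U : Set ℂ} (hU : IsOpen U) {a g : ℂ → ℂ}
    (ha : DifferentiableOn ℂ a U) (hg : DifferentiableOn ℂ g U) {z : ℂ} (hz : z ∈ U) (s q i : ℕ) {N : ℕ} (hN : i + q < N) :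
    zdProd s q (iteratedDeriv i (fun w => a w * g w)) z =
      ∑ k ∈ range N, zdDerivMulCoeff s q i a k z * iteratedDeriv k g z := by
  have hcomp (j : ℕ) : iteratedDeriv j (iteratedDeriv i (fun w => a w * g w)) z =
      iteratedDeriv (i + j) (fun w => a w * g w) z := by
    simp only [iteratedDeriv_eq_iterate, ← Function.iterate_add_apply, add_comm]
  rw [zdProd_eqOn_sum hU ((ha.fun_mul hg).iteratedDeriv_of_isOpen hU i) s q hz]
  simp only [hcomp]
  rw [sum_congr rfl fun j hj => by
    rw [ha.iteratedDeriv_mul_eq_sum hg hU hz (M := i + j) (N := N)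
      (by simp at hj; omega)]]
  simp only [mul_sum, zdDerivMulCoeff, sum_mul]
  rw [sum_comm]
  exact sum_congr rfl fun k _ => sum_congr rfl fun j _ => by ring

theorem zdDerivMulCoeff_self (s q i : ℕ) (a : ℂ → ℂ) (z : ℂ) :
    zdDerivMulCoeff s q i a (i + q) z = z ^ q * a z := by
  rw [zdDerivMulCoeff, sum_eq_single_of_mem q (self_mem_range_succ q) fun j hj hjq => by
    rw [Nat.choose_eq_zero_of_lt (by simp at hj; omega)]
    simp]
  simp [zdCoeff_self]

theorem zdDerivMulCoeff_pred (s q i : ℕ) {p : ℕ} (h : i + q = p + 1) (a : ℂ → ℂ) (z : ℂ) :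
    zdDerivMulCoeff s q i a p z =
      (p + 1) * z ^ q * deriv a z + ((q * (s + q - 1) : ℕ) : ℂ) * z ^ (q - 1) * a z := by
  rcases q with _ | q
  · obtain rfl : i = p + 1 := h
    simp [zdDerivMulCoeff, zdCoeff, Nat.choose_succ_self_right]
  · have hlow : ∑ j ∈ range q, (zdCoeff s (q + 1) j : ℂ) * z ^ j * ((i + j).choose p : ℂ) *
        iteratedDeriv (i + j - p) a z = 0 :=
      sum_eq_zero fun j hj => by
        rw [Nat.choose_eq_zero_of_lt (by simp at hj; omega)]
        simp
    rw [zdDerivMulCoeff, sum_range_succ, sum_range_succ, hlow, zdCoeff_self, zdCoeff_succ_self,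
      show i + (q + 1) = p + 1 by omega, show i + q = p by omega, Nat.choose_succ_self_right,
      Nat.choose_self, show p + 1 - p = 1 by omega, Nat.sub_self, iteratedDeriv_one,
      iteratedDeriv_zero, show s + (q + 1) - 1 = s + q by omega]
    push_cast
    ring

theorem DifferentiableOn.zdDerivMulCoeff {U : Set ℂ} {a : ℂ → ℂ} (ha : DifferentiableOn ℂ a U)
    (hU : IsOpen U) (s q i k : ℕ) : DifferentiableOn ℂ (zdDerivMulCoeff s q i a k) U :=
  DifferentiableOn.fun_sum fun j _ => by
    have := ha.iteratedDeriv_of_isOpen hU (i + j - k)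
    fun_prop

def DopCoeff (n : ℕ) (a : ℕ → ℂ → ℂ) (k : ℕ) (z : ℂ) : ℂ :=
  ∑ i ∈ range (n + 1), zdDerivMulCoeff (i + 2) (n - i) i (a i) k z

theorem Dop_eq_sum_DopCoeff {U : Set ℂ} (hU : IsOpen U) {n : ℕ} {a : ℕ → ℂ → ℂ}
    (ha : ∀ i ≤ n, DifferentiableOn ℂ (a i) U) {g : ℂ → ℂ} (hg : DifferentiableOn ℂ g U)
    {z : ℂ} (hz : z ∈ U) :
    Dop n a g z = ∑ k ∈ range (n + 1), DopCoeff n a k z * iteratedDeriv k g z := by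
  have hsplit : Dop n a g z = ∑ i ∈ range (n + 1),
      zdProd (i + 2) (n - i) (iteratedDeriv i (fun w => a i w * g w)) z := by
    rw [sum_range_succ', Dop, ← Ico_add_one_right_eq_Icc, sum_Ico_eq_sum_range]
    simp [iteratedDeriv_eq_iterate, add_comm]
  simp only [hsplit, DopCoeff, sum_mul]
  rw [sum_comm]
  refine sum_congr rfl fun i hi => ?_
  have hi : i ≤ n := Nat.lt_succ_iff.mp (mem_range.mp hi)
  exact zdProd_iteratedDeriv_mul_eq_sum hU (ha i hi) hg hz _ _ _ (by omega)

theorem DopCoeff_self (n : ℕ) (a : ℕ → ℂ → ℂ) (z : ℂ) :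
    DopCoeff n a n z = ∑ i ∈ range (n + 1), a i z * z ^ (n - i) := by
  refine sum_congr rfl fun i hi => ?_
  have hi : i + (n - i) = n := Nat.add_sub_cancel' (Nat.lt_succ_iff.mp (mem_range.mp hi))
  rw [mul_comm, ← zdDerivMulCoeff_self (i + 2) (n - i) i (a i) z, hi]

theorem deriv_sum_mul_pow {ι : Type*} (s : Finset ι) {a : ι → ℂ → ℂ} (e : ι → ℕ) {z : ℂ}
    (ha : ∀ i ∈ s, DifferentiableAt ℂ (a i) z) :
    deriv (fun u => ∑ i ∈ s, a i u * u ^ e i) z =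
      ∑ i ∈ s, (deriv (a i) z * z ^ e i + a i z * (e i * z ^ (e i - 1))) :=
  (HasDerivAt.fun_sum fun i hi => (ha i hi).hasDerivAt.mul (hasDerivAt_pow (e i) z)).deriv

theorem DopCoeff_sub_one {n : ℕ} (hn : 1 ≤ n) {a : ℕ → ℂ → ℂ} {z : ℂ}
    (ha : ∀ i ≤ n, DifferentiableAt ℂ (a i) z) :
    DopCoeff n a (n - 1) z =
      ((n : ℂ) + 1) * deriv (fun u => ∑ i ∈ range (n + 1), a i u * u ^ (n - i)) z -
        ∑ i ∈ range (n + 1), deriv (a i) z * z ^ (n - i) := by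
  rw [deriv_sum_mul_pow _ _ fun i hi => ha i (Nat.lt_succ_iff.mp (mem_range.mp hi)), mul_sum,
    ← sum_sub_distrib]
  refine sum_congr rfl fun i hi => ?_
  have hi := Nat.lt_succ_iff.mp (mem_range.mp hi)
  rw [zdDerivMulCoeff_pred _ _ _ (by omega), show i + 2 + (n - i) - 1 = n + 1 by omega]
  push_cast [Nat.cast_sub hn]
  ring

theorem differentiableOn_DopCoeff {U : Set ℂ} (hU : IsOpen U) {n : ℕ} {a : ℕ → ℂ → ℂ}
    (ha : ∀ i ≤ n, DifferentiableOn ℂ (a i) U) (k : ℕ) : DifferentiableOn ℂ (DopCoeff n a k) U :=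
  DifferentiableOn.fun_sum fun i hi =>
    (ha i (Nat.lt_succ_iff.mp (mem_range.mp hi))).zdDerivMulCoeff hU _ _ _ _

theorem Dop_leading_coeffs_general (n : ℕ) (hn : 1 ≤ n) (a : ℕ → ℂ → ℂ)
    (ha : ∀ i ≤ n, DifferentiableOn ℂ (a i) 𝔻) :
    ∃ c : ℕ → ℂ → ℂ, (∀ i, DifferentiableOn ℂ (c i) 𝔻) ∧
      ∀ g : ℂ → ℂ, DifferentiableOn ℂ g 𝔻 → ∀ z ∈ 𝔻,
        Dop n a g z =
          (∑ i ∈ Finset.range (n + 1), a i z * z ^ (n - i)) * iteratedDeriv n g z +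
            (((n : ℂ) + 1) * deriv (fun u => ∑ i ∈ Finset.range (n + 1), a i u * u ^ (n - i)) z -
              ∑ i ∈ Finset.range (n + 1), deriv (a i) z * z ^ (n - i)) *
              iteratedDeriv (n - 1) g z +
            ∑ i ∈ Finset.range (n - 1), c i z * iteratedDeriv i g z := by
  have hD : IsOpen 𝔻 := isOpen_ball
  refine ⟨DopCoeff n a, differentiableOn_DopCoeff hD ha, fun g hg z hz => ?_⟩
  rw [Dop_eq_sum_DopCoeff hD ha hg hz, ← DopCoeff_self n a z,
    ← DopCoeff_sub_one hn fun i hi => (ha i hi).differentiableAt (hD.mem_nhds hz)]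
  obtain ⟨m, rfl⟩ := Nat.exists_eq_add_of_le' hn
  rw [Nat.add_sub_cancel, sum_range_succ, sum_range_succ]
  ring

/-- `D_φ = φ̃ Dⁿ + ((n+1)φ̃' - (∂φ/∂z)^~) D^{n-1} + (terms of order ≤ n-2)`,
where `φ̃ = ∑ aᵢ z^{n-i}` and `(∂φ/∂z)^~ = ∑ aᵢ' z^{n-i}`. -/
theorem Dop_leading_coeffs (n : ℕ) (hn : 1 ≤ n) (a : ℕ → ℂ → ℂ)
    (ha : ∀ i ≤ n, DifferentiableOn ℂ (a i) 𝔻)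
    (hab : ∀ i ≤ n, ∃ C, ∀ z ∈ 𝔻, ‖a i z‖ ≤ C) :
    ∃ c : ℕ → ℂ → ℂ, (∀ i, DifferentiableOn ℂ (c i) 𝔻) ∧
      ∀ g : ℂ → ℂ, DifferentiableOn ℂ g 𝔻 → ∀ z ∈ 𝔻,
        Dop n a g z =
          (∑ i ∈ Finset.range (n + 1), a i z * z ^ (n - i)) * iteratedDeriv n g z +
            (((n : ℂ) + 1) * deriv (fun u => ∑ i ∈ Finset.range (n + 1), a i u * u ^ (n - i)) z -
              ∑ i ∈ Finset.range (n + 1), deriv (a i) z * z ^ (n - i)) *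
              iteratedDeriv (n - 1) g z +
            ∑ i ∈ Finset.range (n - 1), c i z * iteratedDeriv i g z :=
  Dop_leading_coeffs_general n hn a ha
end
end
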